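/- Let d ≥ 1, let X be a random vector distributed according to the standard d-variate normal distribution N_d(0, I_d), and let s, t ∈ ℝ^d. Then the matrix expectation E[ (sᵀX) · X Xᵀ · CS⁺(t,X) ] = ( sᵀt (I_d − t tᵀ) + s tᵀ + t sᵀ ) ψ(t). -/

import Mathlib

open MeasureTheory Real

/-- The standard `d`-variate normal distribution `N_d(0, I_d)`, given by its Lebesgue
density `(2π)^{-d/2} exp(-‖x‖²/2)`. -/
noncomputable def stdGaussian (d : ℕ) : Measure (EuclideanSpace ℝ (Fin d)) :=
  volume.withDensity fun x => ENNReal.ofReal ((2 * π) ^ (-(d : ℝ) / 2) * Real.exp (-‖x‖ ^ 2 / 2))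

/-- The characteristic function of the standard `d`-variate normal distribution. -/
noncomputable def stdNormalCF {d : ℕ} (t : EuclideanSpace ℝ (Fin d)) : ℝ :=
  Real.exp (-‖t‖ ^ 2 / 2)

/-- `CS⁺(t,x) = cos(tᵀx) + sin(tᵀx)`. -/
noncomputable def CSplus {d : ℕ} (t x : EuclideanSpace ℝ (Fin d)) : ℝ :=
  Real.cos (inner ℝ t x : ℝ) + Real.sin (inner ℝ t x : ℝ)

/-!
Write `e_t(x) = exp(i⟪x, t⟫)`. For the standard Gaussian, `∫ e_t = exp(-‖t‖²/2)` is its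
characteristic function. Replacing `t` by `t + r s` and differentiating at `r = 0` under the
integral multiplies the integrand by `i⟪x, s⟫`, so the mixed moments `∫ ⟪x,u⟫⟪x,v⟫⟪x,w⟫ e_t`
are obtained from `exp(-‖t‖²/2)` by three directional derivatives, and
`cos θ + sin θ = Re((1 - i) e^{iθ})` turns the complex identity into the real one. The measure
defined by its density coincides with Mathlib's `ProbabilityTheory.stdGaussian` because the two
have the same characteristic function.
-/

open Complex (I)
open scoped Complex RealInnerProductSpace

section LineDerivative

variable {E : Type*} [NormedAddCommGroup E] [InnerProductSpace ℝ E] [MeasurableSpace E]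
  [OpensMeasurableSpace E] {μ : Measure E}

lemma hasDerivAt_integral_mul_cexp_inner_add_smul {P : E → ℂ} (hP : Integrable P μ)
    (hxP : Integrable (fun x ↦ ‖x‖ * ‖P x‖) μ) (t s : E) :
    HasDerivAt (fun r : ℝ ↦ ∫ x, P x * cexp (⟪x, t + r • s⟫ * I) ∂μ)
      (∫ x, P x * (⟪x, s⟫ * I) * cexp (⟪x, t⟫ * I) ∂μ) 0 := by
  have hline : ∀ x (r : ℝ), ⟪x, t + r • s⟫ = ⟪x, t⟫ + r * ⟪x, s⟫ := fun x r ↦ by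
    rw [inner_add_right, real_inner_smul_right]
  have hderiv : ∀ x (r : ℝ), HasDerivAt (fun r : ℝ ↦ P x * cexp (⟪x, t + r • s⟫ * I))
      (P x * (⟪x, s⟫ * I) * cexp (⟪x, t + r • s⟫ * I)) r := fun x r ↦ by
    have h := ((((hasDerivAt_id r).mul_const ⟪x, s⟫).const_add ⟪x, t⟫).ofReal_comp.mul_const
      I).cexp.const_mul (P x)
    simp only [id, one_mul] at h
    simp only [hline]
    exact h.congr_deriv (by ring)
  have hmeas : ∀ r : ℝ, AEStronglyMeasurable (fun x ↦ P x * cexp (⟪x, t + r • s⟫ * I)) μ :=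
    fun r ↦ hP.aestronglyMeasurable.mul (by fun_prop : Continuous _).aestronglyMeasurable
  have hbound : ∀ x (r : ℝ), ‖P x * (⟪x, s⟫ * I) * cexp (⟪x, t + r • s⟫ * I)‖
      ≤ ‖s‖ * (‖x‖ * ‖P x‖) := fun x r ↦ by
    rw [norm_mul, norm_mul, norm_mul, Complex.norm_exp_ofReal_mul_I, Complex.norm_I,
      Complex.norm_real, Real.norm_eq_abs]
    nlinarith [abs_real_inner_le_norm x s, norm_nonneg (P x), norm_nonneg x, norm_nonneg s]
  have h := (hasDerivAt_integral_of_dominated_loc_of_deriv_le (x₀ := (0 : ℝ)) Filter.univ_mem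
    (Filter.Eventually.of_forall hmeas)
    (hP.norm.mono' (hmeas 0) (ae_of_all _ fun x ↦ by simp [Complex.norm_exp_ofReal_mul_I]))
    ((hP.aestronglyMeasurable.mul (by fun_prop : Continuous _).aestronglyMeasurable).mul
      (by fun_prop : Continuous _).aestronglyMeasurable)
    (ae_of_all _ fun x r _ ↦ hbound x r) (hxP.const_mul ‖s‖)
    (ae_of_all _ fun x r _ ↦ hderiv x r)).2
  simpa using h

lemma integral_mul_inner_mul_cexp_eq_of_hasDerivAt {P : E → ℂ} (hP : Integrable P μ)
    (hxP : Integrable (fun x ↦ ‖x‖ * ‖P x‖) μ) {F : E → ℂ}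
    (hF : ∀ t, ∫ x, P x * cexp (⟪x, t⟫ * I) ∂μ = F t) {t s : E} {F' : ℂ}
    (hF' : HasDerivAt (fun r : ℝ ↦ F (t + r • s)) F' 0) :
    ∫ x, P x * ⟪x, s⟫ * cexp (⟪x, t⟫ * I) ∂μ = -I * F' := by
  have h := hasDerivAt_integral_mul_cexp_inner_add_smul hP hxP t s
  simp only [hF] at h
  rw [← h.unique hF', ← integral_const_mul]
  congr 1 with x
  linear_combination (P x * ⟪x, s⟫ * cexp (⟪x, t⟫ * I)) * Complex.I_mul_I

end LineDerivative

section InnerProductSpace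

variable {E : Type*} [NormedAddCommGroup E] [InnerProductSpace ℝ E]

lemma hasDerivAt_inner_add_smul (t s u : E) :
    HasDerivAt (fun r : ℝ ↦ ⟪t + r • s, u⟫) ⟪s, u⟫ 0 := by
  simp only [inner_add_left, real_inner_smul_left]
  simpa using ((hasDerivAt_id (0 : ℝ)).mul_const ⟪s, u⟫).const_add ⟪t, u⟫

lemma hasDerivAt_exp_neg_norm_sq_add_smul (t s : E) :
    HasDerivAt (fun r : ℝ ↦ rexp (-‖t + r • s‖ ^ 2 / 2)) (-⟪t, s⟫ * rexp (-‖t‖ ^ 2 / 2)) 0 := by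
  have h := ((((hasDerivAt_id (0 : ℝ)).smul_const s).const_add t).norm_sq.neg.div_const 2).exp
  simp only [id, Pi.neg_apply, zero_smul, add_zero, one_smul] at h
  exact h.congr_deriv (by ring)

lemma norm_ofReal_inner_le (x u : E) : ‖(⟪x, u⟫ : ℂ)‖ ≤ ‖u‖ * ‖x‖ := by
  rw [Complex.norm_real, Real.norm_eq_abs, mul_comm]
  exact abs_real_inner_le_norm x u

lemma norm_ofReal_inner_mul_ofReal_inner_le (x u v : E) :
    ‖(⟪x, u⟫ : ℂ) * ⟪x, v⟫‖ ≤ ‖u‖ * ‖v‖ * ‖x‖ ^ 2 := by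
  rw [norm_mul]
  calc ‖(⟪x, u⟫ : ℂ)‖ * ‖(⟪x, v⟫ : ℂ)‖ ≤ (‖u‖ * ‖x‖) * (‖v‖ * ‖x‖) :=
        mul_le_mul (norm_ofReal_inner_le x u) (norm_ofReal_inner_le x v) (norm_nonneg _)
          (by positivity)
    _ = ‖u‖ * ‖v‖ * ‖x‖ ^ 2 := by ring

end InnerProductSpace

lemma re_one_sub_I_mul_ofReal_mul_cexp (a θ : ℝ) :
    ((1 - I) * (a * cexp (θ * I))).re = a * (Real.cos θ + Real.sin θ) := by
  simp only [Complex.mul_re, Complex.mul_im, Complex.exp_ofReal_mul_I_re,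
    Complex.exp_ofReal_mul_I_im, Complex.ofReal_re, Complex.ofReal_im, Complex.sub_re,
    Complex.sub_im, Complex.one_re, Complex.one_im, Complex.I_re, Complex.I_im]
  ring

namespace ProbabilityTheory

variable {E : Type*} [NormedAddCommGroup E] [InnerProductSpace ℝ E] [FiniteDimensional ℝ E]
  [MeasurableSpace E] [BorelSpace E]

variable (E) in
theorem stdGaussian_eq_withDensity :
    stdGaussian E = volume.withDensity fun x ↦
      ENNReal.ofReal ((2 * π) ^ (-(Module.finrank ℝ E : ℝ) / 2) * rexp (-‖x‖ ^ 2 / 2)) := by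
  set c : ℝ := (2 * π) ^ (-(Module.finrank ℝ E : ℝ) / 2)
  have hexp : Integrable fun x : E ↦ rexp (-‖x‖ ^ 2 / 2) := by
    have h := GaussianFourier.integral_rexp_neg_mul_sq_norm (V := E) (b := 1 / 2) (by norm_num)
    refine Integrable.of_integral_ne_zero ?_
    convert h.trans_ne (by positivity) using 3 with x
    ring_nf
  have : IsFiniteMeasure (volume.withDensity fun x : E ↦ ENNReal.ofReal (c * rexp (-‖x‖ ^ 2 / 2))) :=
    isFiniteMeasure_withDensity_ofReal (hexp.const_mul c).2
  refine (Measure.ext_of_charFun (funext fun t ↦ ?_)).symm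
  rw [charFun_apply, charFun_stdGaussian, integral_withDensity_eq_integral_toReal_smul
    (by fun_prop) (ae_of_all _ fun _ ↦ ENNReal.ofReal_lt_top)]
  have hρ : ∀ x : E, (ENNReal.ofReal (c * rexp (-‖x‖ ^ 2 / 2))).toReal • cexp (⟪x, t⟫ * I)
      = c * cexp (-(1 / 2 : ℂ) * ‖x‖ ^ 2 + I * ⟪t, x⟫) := fun x ↦ by
    rw [ENNReal.toReal_ofReal (by positivity), Complex.real_smul, Complex.ofReal_mul,
      Complex.ofReal_exp, mul_assoc, ← Complex.exp_add, real_inner_comm]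
    push_cast
    ring_nf
  simp_rw [hρ]
  rw [integral_const_mul, GaussianFourier.integral_cexp_neg_mul_sq_norm_add (by norm_num),
    ← mul_assoc]
  have hc : (c : ℂ) * (π / (1 / 2 : ℂ)) ^ ((Module.finrank ℝ E : ℂ) / 2) = 1 := by
    have h2π : ((2 * π : ℝ) : ℂ) ≠ 0 := by exact_mod_cast (by positivity : (2 * π : ℝ) ≠ 0)
    rw [Complex.ofReal_cpow (by positivity), show (π : ℂ) / (1 / 2) = ((2 * π : ℝ) : ℂ) by
      push_cast; ring, ← Complex.cpow_add _ _ h2π]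
    push_cast
    ring_nf
    exact Complex.cpow_zero _
  rw [hc, one_mul]
  congr 1
  rw [Complex.I_sq]
  ring

lemma IsGaussian.integrable_of_norm_le_pow {F : Type*} [NormedAddCommGroup F] (μ : Measure E)
    [IsGaussian μ] {f : E → F} (hf : AEStronglyMeasurable f μ) {C : ℝ} {n : ℕ}
    (hle : ∀ x, ‖f x‖ ≤ C * ‖x‖ ^ n) : Integrable f μ :=
  (((IsGaussian.memLp_id μ n (by simp)).integrable_norm_pow').const_mul C).mono' hf
    (ae_of_all _ hle)

lemma integral_mul_inner_mul_cexp_stdGaussian_eq {P : E → ℂ} (hPc : Continuous P) {C : ℝ} {n : ℕ}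
    (hPle : ∀ x, ‖P x‖ ≤ C * ‖x‖ ^ n) {F : E → ℂ}
    (hF : ∀ t, ∫ x, P x * cexp (⟪x, t⟫ * I) ∂(stdGaussian E) = F t) {t s : E} {F' : ℂ}
    (hF' : HasDerivAt (fun r : ℝ ↦ F (t + r • s)) F' 0) :
    ∫ x, P x * ⟪x, s⟫ * cexp (⟪x, t⟫ * I) ∂(stdGaussian E) = -I * F' := by
  refine integral_mul_inner_mul_cexp_eq_of_hasDerivAt
    (IsGaussian.integrable_of_norm_le_pow _ hPc.aestronglyMeasurable hPle)
    (IsGaussian.integrable_of_norm_le_pow _ (by fun_prop) (C := C) (n := n + 1) fun x ↦ ?_) hF hF'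
  rw [norm_mul, norm_norm, norm_norm, pow_succ]
  nlinarith [hPle x, norm_nonneg x, norm_nonneg (P x)]

variable (E) in
lemma integral_cexp_inner_stdGaussian (t : E) :
    ∫ x, cexp (⟪x, t⟫ * I) ∂(stdGaussian E) = (rexp (-‖t‖ ^ 2 / 2) : ℂ) := by
  rw [← charFun_apply, charFun_stdGaussian]
  push_cast
  rfl

lemma integral_inner_mul_cexp_stdGaussian (t u : E) :
    ∫ x, (⟪x, u⟫ : ℂ) * cexp (⟪x, t⟫ * I) ∂(stdGaussian E)
      = I * (⟪t, u⟫ * rexp (-‖t‖ ^ 2 / 2) : ℝ) := by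
  have h := integral_mul_inner_mul_cexp_stdGaussian_eq (P := fun _ ↦ 1) continuous_const
    (C := 1) (n := 0) (by simp) (by simpa only [one_mul] using integral_cexp_inner_stdGaussian E)
    (hasDerivAt_exp_neg_norm_sq_add_smul t u).ofReal_comp
  simp only [one_mul] at h
  rw [h]
  push_cast
  ring

lemma integral_inner_mul_inner_mul_cexp_stdGaussian (t u v : E) :
    ∫ x, (⟪x, u⟫ : ℂ) * ⟪x, v⟫ * cexp (⟪x, t⟫ * I) ∂(stdGaussian E)
      = ((⟪u, v⟫ - ⟪t, u⟫ * ⟪t, v⟫) * rexp (-‖t‖ ^ 2 / 2) : ℝ) := by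
  have h := integral_mul_inner_mul_cexp_stdGaussian_eq (by fun_prop) (C := ‖u‖) (n := 1)
    (by simpa using norm_ofReal_inner_le · u) (integral_inner_mul_cexp_stdGaussian · u)
    (((hasDerivAt_inner_add_smul t v u).mul
      (hasDerivAt_exp_neg_norm_sq_add_smul t v)).ofReal_comp.const_mul I)
  simp only [zero_smul, add_zero] at h
  rw [h, ← mul_assoc, neg_mul, Complex.I_mul_I, neg_neg, one_mul, real_inner_comm v u]
  congr 1
  ring

lemma integral_inner_mul_inner_mul_inner_mul_cexp_stdGaussian (t u v w : E) :
    ∫ x, (⟪x, u⟫ : ℂ) * ⟪x, v⟫ * ⟪x, w⟫ * cexp (⟪x, t⟫ * I) ∂(stdGaussian E)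
      = I * ((⟪t, w⟫ * (⟪u, v⟫ - ⟪t, u⟫ * ⟪t, v⟫) + ⟪w, u⟫ * ⟪t, v⟫ + ⟪t, u⟫ * ⟪w, v⟫)
          * rexp (-‖t‖ ^ 2 / 2) : ℝ) := by
  have h := integral_mul_inner_mul_cexp_stdGaussian_eq (by fun_prop)
    (norm_ofReal_inner_mul_ofReal_inner_le · u v)
    (integral_inner_mul_inner_mul_cexp_stdGaussian · u v)
    ((((hasDerivAt_inner_add_smul t w u).mul (hasDerivAt_inner_add_smul t w v)).const_sub
      ⟪u, v⟫ |>.mul (hasDerivAt_exp_neg_norm_sq_add_smul t w)).ofReal_comp)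
  simp only [Pi.mul_apply, zero_smul, add_zero] at h
  rw [h]
  push_cast
  ring

lemma integral_inner_mul_inner_mul_inner_mul_cos_add_sin_stdGaussian (t u v w : E) :
    ∫ x, ⟪x, u⟫ * ⟪x, v⟫ * ⟪x, w⟫ * (Real.cos ⟪t, x⟫ + Real.sin ⟪t, x⟫) ∂(stdGaussian E)
      = (⟪t, w⟫ * (⟪u, v⟫ - ⟪t, u⟫ * ⟪t, v⟫) + ⟪w, u⟫ * ⟪t, v⟫ + ⟪t, u⟫ * ⟪w, v⟫)
          * rexp (-‖t‖ ^ 2 / 2) := by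
  set f : E → ℂ := fun x ↦ (⟪x, u⟫ : ℂ) * ⟪x, v⟫ * ⟪x, w⟫ * cexp (⟪x, t⟫ * I)
  have hre : ∀ x, ⟪x, u⟫ * ⟪x, v⟫ * ⟪x, w⟫ * (Real.cos ⟪t, x⟫ + Real.sin ⟪t, x⟫)
      = RCLike.re ((1 - I) * f x) := fun x ↦ by
    rw [RCLike.re_to_complex, real_inner_comm x t, ← re_one_sub_I_mul_ofReal_mul_cexp]
    push_cast
    rfl
  have hf : Integrable f (stdGaussian E) :=
    IsGaussian.integrable_of_norm_le_pow _ (by fun_prop) (C := ‖u‖ * ‖v‖ * ‖w‖) (n := 3)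
      fun x ↦ by
        simp only [f, norm_mul, Complex.norm_exp_ofReal_mul_I, mul_one]
        calc ‖(⟪x, u⟫ : ℂ)‖ * ‖(⟪x, v⟫ : ℂ)‖ * ‖(⟪x, w⟫ : ℂ)‖
            ≤ (‖u‖ * ‖v‖ * ‖x‖ ^ 2) * (‖w‖ * ‖x‖) := by
              rw [← norm_mul]
              exact mul_le_mul (norm_ofReal_inner_mul_ofReal_inner_le x u v)
                (norm_ofReal_inner_le x w) (norm_nonneg _) (by positivity)
          _ = ‖u‖ * ‖v‖ * ‖w‖ * ‖x‖ ^ 3 := by ring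
  simp_rw [hre]
  rw [integral_re (hf.const_mul _), integral_const_mul,
    integral_inner_mul_inner_mul_inner_mul_cexp_stdGaussian]
  simp [Complex.mul_re, -Complex.ofReal_exp]

end ProbabilityTheory

lemma stdGaussian_eq_probabilityTheory_stdGaussian (d : ℕ) :
    stdGaussian d = ProbabilityTheory.stdGaussian (EuclideanSpace ℝ (Fin d)) := by
  rw [ProbabilityTheory.stdGaussian_eq_withDensity, finrank_euclideanSpace_fin]
  rfl

theorem stdGaussian_matrix_inner_CSplus_expectation_general (d : ℕ)
    (s t : EuclideanSpace ℝ (Fin d)) (k l : Fin d) :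
    ∫ x, (inner ℝ s x : ℝ) * (x k * x l) * CSplus t x ∂(stdGaussian d)
      = ((inner ℝ s t : ℝ) * ((if k = l then (1 : ℝ) else 0) - t k * t l)
          + s k * t l + t k * s l) * stdNormalCF t := by
  set e : Fin d → EuclideanSpace ℝ (Fin d) := fun i ↦ EuclideanSpace.single i 1
  have hcoord : ∀ (x : EuclideanSpace ℝ (Fin d)) i, x i = ⟪x, e i⟫ := fun x i ↦ by
    simp [e, EuclideanSpace.inner_single_right]
  calc ∫ x, ⟪s, x⟫ * (x k * x l) * CSplus t x ∂(stdGaussian d)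
      = ∫ x, ⟪x, e k⟫ * ⟪x, e l⟫ * ⟪x, s⟫ * (Real.cos ⟪t, x⟫ + Real.sin ⟪t, x⟫)
          ∂(ProbabilityTheory.stdGaussian _) := by
        rw [stdGaussian_eq_probabilityTheory_stdGaussian]
        congr with x
        rw [CSplus, ← hcoord, ← hcoord, real_inner_comm s x]
        ring
    _ = _ := by
        rw [ProbabilityTheory.integral_inner_mul_inner_mul_inner_mul_cos_add_sin_stdGaussian,
          stdNormalCF]
        simp only [e, EuclideanSpace.inner_single_right, PiLp.single_apply, real_inner_comm s t,
          eq_comm (a := l)]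
        simp

/-- For `X ~ N_d(0, I_d)`, entrywise:
`E[(sᵀX) X Xᵀ CS⁺(t,X)] = (sᵀt (I_d - t tᵀ) + s tᵀ + t sᵀ) ψ(t)`. -/
theorem stdGaussian_matrix_inner_CSplus_expectation (d : ℕ) (hd : 1 ≤ d)
    (s t : EuclideanSpace ℝ (Fin d)) (k l : Fin d) :
    ∫ x, (inner ℝ s x : ℝ) * (x k * x l) * CSplus t x ∂(stdGaussian d)
      = ((inner ℝ s t : ℝ) * ((if k = l then (1 : ℝ) else 0) - t k * t l)
          + s k * t l + t k * s l) * stdNormalCF t :=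
  stdGaussian_matrix_inner_CSplus_expectation_general d s t k l
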